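/- arXiv:1107.5531 — 3 statements merged into one kernel-verified Lean document; each statement's English description precedes it below -/
import Mathlib

section
/- Let L be a monotone machine with the additional property that whenever (p,y),(q,x) ∈ L and p ⊑ q, then y = x. Let L_t be the first t pairs of L and let L̄_t ⊆ L_t be the set of pairs (p,y) such that no (q,x) ∈ L_t has q a proper prefix of p. Then for each t, the set of programs in L̄_t is prefix-free, and the function P(y,t) := Σ_{p : (p,y) ∈ L̄_t} 2^{-ℓ(p)} satisfies P(y,t+1) ≥ P(y,t) for all y and t; hence P(y) := lim_{t→∞} P(y,t) exists and Σ_y P(y) ≤ 1. -/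
open Filter ENNReal

/-- Finite binary strings. -/
abbrev BStr := List Bool

/-- A recursively enumerable set of program/output pairs. -/
def RECoded (L : Set (BStr × BStr)) : Prop :=
  ∃ f : ℕ → Option (BStr × BStr), Computable f ∧ L = {x | ∃ n, f n = some x}

/-- A set of strings is prefix-free if no element is a proper prefix of another. -/
def PrefixFreeSet (S : Set BStr) : Prop :=
  ∀ p ∈ S, ∀ q ∈ S, p <+: q → p = q

/-- A prefix machine: r.e. set of pairs whose programs form a prefix-free set. -/
def PrefixMachine (L : Set (BStr × BStr)) : Prop :=
  RECoded L ∧ PrefixFreeSet {p | ∃ y, (p, y) ∈ L}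

/-- A monotone machine. -/
def MonotoneMachine (L : Set (BStr × BStr)) : Prop :=
  RECoded L ∧ ∀ p y q x, (p, y) ∈ L → (q, x) ∈ L → y.length ≤ x.length → p <+: q → y <+: x

/-- `y ∈ L(p)` for a monotone machine `L`. -/
def MonOut (L : Set (BStr × BStr)) (p y : BStr) : Prop :=
  (∃ x, (p, x) ∈ L ∧ y <+: x) ∧ ∀ q z, (q, z) ∈ L → q <+: p → q ≠ p → ¬ y <+: z

/-- `λ_L(y) = Σ_{p : (p,y) ∈ L} 2^{-ℓ(p)}` for a prefix machine. -/
noncomputable def lamP (L : Set (BStr × BStr)) (y : BStr) : ℝ≥0∞ :=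
  ∑' p : {p : BStr // (p, y) ∈ L}, (2 : ℝ≥0∞)⁻¹ ^ (p : BStr).length

/-- `M_L(y) = Σ_{p : y ∈ L(p)} 2^{-ℓ(p)}` for a monotone machine. -/
noncomputable def MM (L : Set (BStr × BStr)) (y : BStr) : ℝ≥0∞ :=
  ∑' p : {p : BStr // MonOut L p y}, (2 : ℝ≥0∞)⁻¹ ^ (p : BStr).length

/-- A universal prefix machine: `(p,y) ∈ L ↔ (i'p, y) ∈ U` for some prefix code `i'` of `L`. -/
def IsUniversalPrefix (U : Set (BStr × BStr)) : Prop :=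
  PrefixMachine U ∧ ∀ L, PrefixMachine L → ∃ ip : BStr,
    ∀ p y, ((p, y) ∈ L ↔ (ip ++ p, y) ∈ U)

/-- A universal monotone machine. -/
def IsUniversalMonotone (U : Set (BStr × BStr)) : Prop :=
  MonotoneMachine U ∧ ∀ L, MonotoneMachine L → ∃ ip : BStr,
    ∀ p y, ((p, y) ∈ L ↔ (ip ++ p, y) ∈ U)

/-- Prefix Kolmogorov complexity w.r.t. a (universal) prefix machine `U`. -/
noncomputable def Kc (U : Set (BStr × BStr)) (y : BStr) : ℕ :=
  sInf {n | ∃ p : BStr, (p, y) ∈ U ∧ p.length = n}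

/-- Complexity of a natural number via its binary representation. -/
noncomputable def KNat (U : Set (BStr × BStr)) (n : ℕ) : ℕ := Kc U (Nat.bits n)

/-- The first `n` bits of an infinite binary string. -/
def pre (ω : ℕ → Bool) (n : ℕ) : BStr := (List.range n).map ω


lemma kraft_aux : ∀ n (S : Finset BStr), (∀ q ∈ S, q.length ≤ n) →
    (∀ p ∈ S, ∀ q ∈ S, p <+: q → p = q) →
    ∑ q ∈ S, (2:ℝ)⁻¹ ^ q.length ≤ 1 := by
  intro n
  induction n with
  | zero =>
    intro S hlen hpf
    have hS : S ⊆ {([] : BStr)} := fun q hq =>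
      Finset.mem_singleton.2 (List.length_eq_zero_iff.1 (Nat.le_zero.1 (hlen q hq)))
    calc ∑ q ∈ S, (2:ℝ)⁻¹ ^ q.length
        ≤ ∑ q ∈ ({([] : BStr)} : Finset BStr), (2:ℝ)⁻¹ ^ q.length :=
          Finset.sum_le_sum_of_subset_of_nonneg hS (fun q _ _ => by positivity)
      _ = 1 := by simp
  | succ n ih =>
    intro S hlen hpf
    by_cases h0 : ([] : BStr) ∈ S
    · have hS : S ⊆ {([] : BStr)} := fun q hq =>
        Finset.mem_singleton.2 (hpf [] h0 q hq (List.nil_prefix)).symm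
      calc ∑ q ∈ S, (2:ℝ)⁻¹ ^ q.length
          ≤ ∑ q ∈ ({([] : BStr)} : Finset BStr), (2:ℝ)⁻¹ ^ q.length :=
            Finset.sum_le_sum_of_subset_of_nonneg hS (fun q _ _ => by positivity)
        _ = 1 := by simp
    · have half : ∀ b : Bool,
          ∑ q ∈ S.filter (fun q => q.head? = some b), (2:ℝ)⁻¹ ^ q.length ≤ (2:ℝ)⁻¹ := by
        intro b
        set T := S.filter (fun q => q.head? = some b) with hT
        have hcons : ∀ q ∈ T, q = b :: q.tail := by
          intro q hq
          have := (Finset.mem_filter.1 hq).2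
          cases q with
          | nil => simp at this
          | cons a l => simp at this; simp [this]
        have hinj : Set.InjOn List.tail (T : Set BStr) := by
          intro q hq r hr h
          rw [hcons q hq, hcons r hr, h]
        have hsum : ∑ q ∈ T, (2:ℝ)⁻¹ ^ q.length
            = ∑ r ∈ T.image List.tail, (2:ℝ)⁻¹ ^ (r.length + 1) := by
          rw [Finset.sum_image (fun q hq r hr h => hinj hq hr h)]
          apply Finset.sum_congr rfl
          intro q hq
          rw [hcons q hq]; simp
        rw [hsum]
        have hle : ∑ r ∈ T.image List.tail, (2:ℝ)⁻¹ ^ r.length ≤ 1 := by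
          apply ih
          · intro r hr
            obtain ⟨q, hq, rfl⟩ := Finset.mem_image.1 hr
            have := hlen q (Finset.mem_filter.1 hq).1
            rw [hcons q hq] at this
            simpa using this
          · intro p hp q hq hpq
            obtain ⟨p', hp', rfl⟩ := Finset.mem_image.1 hp
            obtain ⟨q', hq', rfl⟩ := Finset.mem_image.1 hq
            have : p' = q' := by
              apply hpf p' (Finset.mem_filter.1 hp').1 q' (Finset.mem_filter.1 hq').1
              rw [hcons p' hp', hcons q' hq']
              exact List.cons_prefix_cons.2 ⟨rfl, hpq⟩
            rw [this]
        calc ∑ r ∈ T.image List.tail, (2:ℝ)⁻¹ ^ (r.length + 1)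
            = (2:ℝ)⁻¹ * ∑ r ∈ T.image List.tail, (2:ℝ)⁻¹ ^ r.length := by
              rw [Finset.mul_sum]; apply Finset.sum_congr rfl; intro r _; ring
          _ ≤ (2:ℝ)⁻¹ * 1 := by
              apply mul_le_mul_of_nonneg_left hle (by norm_num)
          _ = (2:ℝ)⁻¹ := by ring
      have hsplit : ∑ q ∈ S, (2:ℝ)⁻¹ ^ q.length
          = ∑ q ∈ S.filter (fun q => q.head? = some false), (2:ℝ)⁻¹ ^ q.length
          + ∑ q ∈ S.filter (fun q => q.head? = some true), (2:ℝ)⁻¹ ^ q.length := by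
        rw [← Finset.sum_filter_add_sum_filter_not S (fun q => q.head? = some false)]
        congr 1
        apply Finset.sum_congr _ (fun _ _ => rfl)
        apply Finset.filter_congr
        intro q hq
        cases q with
        | nil => exact absurd hq h0
        | cons a l => cases a <;> simp
      rw [hsplit]
      have := half false
      have := half true
      norm_num
      linarith [half false, half true]

lemma kraft (S : Finset BStr) (hpf : ∀ p ∈ S, ∀ q ∈ S, p <+: q → p = q) :
    ∑ q ∈ S, (2:ℝ)⁻¹ ^ q.length ≤ 1 :=
  kraft_aux (S.sup List.length) S (fun q hq => Finset.le_sup hq) hpf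

lemma kraft_ext (p : BStr) (S : Finset BStr) (hpf : ∀ q ∈ S, ∀ r ∈ S, q <+: r → q = r)
    (hext : ∀ q ∈ S, p <+: q) :
    ∑ q ∈ S, (2:ℝ)⁻¹ ^ q.length ≤ (2:ℝ)⁻¹ ^ p.length := by
  have hrec : ∀ q ∈ S, q = p ++ q.drop p.length := by
    intro q hq
    obtain ⟨r, rfl⟩ := hext q hq
    simp
  have hinj : Set.InjOn (fun q : BStr => q.drop p.length) (S : Set BStr) := by
    intro q hq r hr h
    rw [hrec q hq, hrec r hr]; simp only at h; rw [h]
  have hsum : ∑ q ∈ S, (2:ℝ)⁻¹ ^ q.length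
      = ∑ r ∈ S.image (fun q => q.drop p.length), (2:ℝ)⁻¹ ^ (p.length + r.length) := by
    rw [Finset.sum_image (fun q hq r hr h => hinj hq hr h)]
    apply Finset.sum_congr rfl
    intro q hq
    conv_lhs => rw [hrec q hq]
    simp
  rw [hsum]
  have hle : ∑ r ∈ S.image (fun q => q.drop p.length), (2:ℝ)⁻¹ ^ r.length ≤ 1 := by
    apply kraft
    intro r hr s hs hrs
    obtain ⟨q, hq, rfl⟩ := Finset.mem_image.1 hr
    obtain ⟨q', hq', rfl⟩ := Finset.mem_image.1 hs
    have : q = q' := by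
      apply hpf q hq q' hq'
      rw [hrec q hq, hrec q' hq']
      exact (List.prefix_append_right_inj p).2 hrs
    rw [this]
  calc ∑ r ∈ S.image (fun q => q.drop p.length), (2:ℝ)⁻¹ ^ (p.length + r.length)
      = (2:ℝ)⁻¹ ^ p.length * ∑ r ∈ S.image (fun q => q.drop p.length), (2:ℝ)⁻¹ ^ r.length := by
        rw [Finset.mul_sum]; apply Finset.sum_congr rfl; intro r _; rw [pow_add]
    _ ≤ (2:ℝ)⁻¹ ^ p.length * 1 := mul_le_mul_of_nonneg_left hle (by positivity)
    _ = _ := by ring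

open scoped Classical in
/-- The indices among the first t enumerated pairs whose program has no proper prefix
among the first t programs. -/
noncomputable def LbarIdx (e : ℕ → BStr × BStr) (t : ℕ) : Finset ℕ :=
  (Finset.range t).filter
    (fun i => ¬ ∃ j ∈ Finset.range t, (e j).1 <+: (e i).1 ∧ (e j).1 ≠ (e i).1)

/-- P(y,t). -/
noncomputable def Papprox (e : ℕ → BStr × BStr) (y : BStr) (t : ℕ) : ℝ :=
  ∑ i ∈ LbarIdx e t, if (e i).2 = y then (2 : ℝ)⁻¹ ^ (e i).1.length else 0

section Main

variable (e : ℕ → BStr × BStr)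

lemma mem_LbarIdx {t i : ℕ} : i ∈ LbarIdx e t ↔
    i < t ∧ ∀ j < t, (e j).1 <+: (e i).1 → (e j).1 = (e i).1 := by
  classical
  simp only [LbarIdx, Finset.mem_filter, Finset.mem_range]
  push_neg
  constructor
  · rintro ⟨h1, h2⟩
    refine ⟨h1, fun j hj hpre => ?_⟩
    by_contra hne
    exact hne (h2 j hj hpre)
  · rintro ⟨h1, h2⟩
    exact ⟨h1, fun j hj hpre => h2 j hj hpre⟩

lemma total_le_one (hinj : ∀ i j, (e i).1 = (e j).1 → i = j)
    (hpf : ∀ i ∈ LbarIdx e t, ∀ j ∈ LbarIdx e t, (e i).1 <+: (e j).1 → (e i).1 = (e j).1) :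
    ∑ i ∈ LbarIdx e t, (2:ℝ)⁻¹ ^ (e i).1.length ≤ 1 := by
  have hiOn : Set.InjOn (fun i => (e i).1) (LbarIdx e t : Set ℕ) :=
    fun i _ j _ h => hinj i j h
  have himg : ∑ q ∈ (LbarIdx e t).image (fun i => (e i).1), (2:ℝ)⁻¹ ^ q.length
      = ∑ i ∈ LbarIdx e t, (2:ℝ)⁻¹ ^ (e i).1.length :=
    by rw [Finset.sum_image (fun i hi j hj h => hiOn hi hj h)]
  rw [← himg]
  apply kraft
  intro p hp q hq hpq
  obtain ⟨i, hi, rfl⟩ := Finset.mem_image.1 hp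
  obtain ⟨j, hj, rfl⟩ := Finset.mem_image.1 hq
  exact hpf i hi j hj hpq

end Main

/-- for a monotone machine in which comparable programs have equal outputs,
the programs of L̄_t are prefix-free, P(y,t) is nondecreasing in t, its limit P exists,
and Σ_y P(y) ≤ 1. -/
theorem Papprox_monotone_limit (L : Set (BStr × BStr)) (e : ℕ → BStr × BStr)
    (he : Function.Injective e) (hrange : L = Set.range e) (hL : MonotoneMachine L)
    (hfun : ∀ p y q x, (p, y) ∈ L → (q, x) ∈ L → p <+: q → y = x) :
    (∀ t, ∀ i ∈ LbarIdx e t, ∀ j ∈ LbarIdx e t, (e i).1 <+: (e j).1 → (e i).1 = (e j).1) ∧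
    (∀ y t, Papprox e y t ≤ Papprox e y (t + 1)) ∧
    (∃ P : BStr → ℝ, (∀ y, Tendsto (fun t => Papprox e y t) atTop (nhds (P y))) ∧
      ∑' y : BStr, ENNReal.ofReal (P y) ≤ 1) := by
  classical
  have hmemL : ∀ i, ((e i).1, (e i).2) ∈ L := by
    intro i
    rw [hrange]
    exact ⟨i, rfl⟩
  have prog_inj : ∀ i j, (e i).1 = (e j).1 → i = j := by
    intro i j h
    have hout : (e i).2 = (e j).2 :=
      hfun (e i).1 (e i).2 (e j).1 (e j).2 (hmemL i) (hmemL j) (h ▸ List.prefix_refl _)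
    exact he (Prod.ext h hout)
  have part1 : ∀ t, ∀ i ∈ LbarIdx e t, ∀ j ∈ LbarIdx e t,
      (e i).1 <+: (e j).1 → (e i).1 = (e j).1 := by
    intro t i hi j hj hpre
    exact ((mem_LbarIdx e).1 hj).2 i ((mem_LbarIdx e).1 hi).1 hpre
  have part2 : ∀ y t, Papprox e y t ≤ Papprox e y (t + 1) := by
    intro y t
    set f : ℕ → ℝ := fun i => if (e i).2 = y then (2:ℝ)⁻¹ ^ (e i).1.length else 0 with hf
    have hf0 : ∀ i, 0 ≤ f i := by
      intro i; rw [hf]; dsimp only; split <;> positivity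
    set pt := (e t).1 with hpt
    set R := (LbarIdx e t).filter (fun i => pt <+: (e i).1 ∧ pt ≠ (e i).1) with hR
    have hsub : LbarIdx e t \ R ⊆ LbarIdx e (t + 1) := by
      intro i hi
      obtain ⟨hmem, hnR⟩ := Finset.mem_sdiff.1 hi
      obtain ⟨hit, h2⟩ := (mem_LbarIdx e).1 hmem
      rw [mem_LbarIdx]
      refine ⟨hit.trans (Nat.lt_succ_self t), fun j hj hpre => ?_⟩
      rcases Nat.lt_succ_iff_lt_or_eq.1 hj with hj' | rfl
      · exact h2 j hj' hpre
      · by_contra hne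
        exact hnR (Finset.mem_filter.2 ⟨hmem, hpre, hne⟩)
    have hPt : Papprox e y t = ∑ i ∈ LbarIdx e t \ R, f i + ∑ i ∈ R, f i :=
      (Finset.sum_sdiff (Finset.filter_subset _ _)).symm
    have htnot : t ∉ LbarIdx e t \ R := by
      intro h
      exact absurd ((mem_LbarIdx e).1 (Finset.mem_sdiff.1 h).1).1 (lt_irrefl t)
    by_cases hRe : R = ∅
    · have hsub' : LbarIdx e t ⊆ LbarIdx e (t + 1) := by
        intro i hi
        apply hsub
        rw [Finset.mem_sdiff, hRe]
        exact ⟨hi, Finset.notMem_empty i⟩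
      exact Finset.sum_le_sum_of_subset_of_nonneg hsub' (fun i _ _ => hf0 i)
    · obtain ⟨i0, hi0⟩ := Finset.nonempty_iff_ne_empty.2 hRe
      obtain ⟨hi0m, hpre0, hne0⟩ := Finset.mem_filter.1 hi0
      have htmem : t ∈ LbarIdx e (t + 1) := by
        rw [mem_LbarIdx]
        refine ⟨Nat.lt_succ_self t, fun j hj hpre => ?_⟩
        rcases Nat.lt_succ_iff_lt_or_eq.1 hj with hj' | rfl
        · have heq : (e j).1 = (e i0).1 :=
            ((mem_LbarIdx e).1 hi0m).2 j hj' (hpre.trans hpre0)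
          exact hpre.eq_of_length (le_antisymm hpre.length_le (heq ▸ hpre0).length_le)
        · rfl
      have hout : ∀ i ∈ R, (e i).2 = (e t).2 := by
        intro i hi
        obtain ⟨_, hpre, _⟩ := Finset.mem_filter.1 hi
        exact (hfun pt (e t).2 (e i).1 (e i).2 (hmemL t) (hmemL i) hpre).symm
      have hsumR : ∑ i ∈ R, f i ≤ f t := by
        by_cases hyt : (e t).2 = y
        · have hcongr : ∀ i ∈ R, f i = (2:ℝ)⁻¹ ^ (e i).1.length := by
            intro i hi; rw [hf]; dsimp only; rw [if_pos ((hout i hi).trans hyt)]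
          have hft : f t = (2:ℝ)⁻¹ ^ pt.length := by
            rw [hf]; dsimp only; rw [if_pos hyt]
          rw [Finset.sum_congr rfl hcongr, hft]
          have hiOn : Set.InjOn (fun i => (e i).1) (R : Set ℕ) :=
            fun i _ j _ h => prog_inj i j h
          have himg : ∑ q ∈ R.image (fun i => (e i).1), (2:ℝ)⁻¹ ^ q.length
              = ∑ i ∈ R, (2:ℝ)⁻¹ ^ (e i).1.length := by
            rw [Finset.sum_image (fun i hi j hj h => hiOn hi hj h)]
          rw [← himg]
          apply kraft_ext
          · intro q hq r hr hqr
            obtain ⟨i, hi, rfl⟩ := Finset.mem_image.1 hq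
            obtain ⟨j, hj, rfl⟩ := Finset.mem_image.1 hr
            exact part1 t i (Finset.filter_subset _ _ hi) j (Finset.filter_subset _ _ hj) hqr
          · intro q hq
            obtain ⟨i, hi, rfl⟩ := Finset.mem_image.1 hq
            exact (Finset.mem_filter.1 hi).2.1
        · have hcongr : ∀ i ∈ R, f i = 0 := by
            intro i hi; rw [hf]; dsimp only
            rw [if_neg (fun h => hyt ((hout i hi).symm.trans h))]
          rw [Finset.sum_congr rfl hcongr, Finset.sum_const, smul_zero]
          exact hf0 t
      calc Papprox e y t = ∑ i ∈ LbarIdx e t \ R, f i + ∑ i ∈ R, f i := hPt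
        _ ≤ ∑ i ∈ LbarIdx e t \ R, f i + f t := by linarith
        _ = ∑ i ∈ insert t (LbarIdx e t \ R), f i := by
            rw [Finset.sum_insert htnot]; ring
        _ ≤ ∑ i ∈ LbarIdx e (t + 1), f i :=
            Finset.sum_le_sum_of_subset_of_nonneg
              (Finset.insert_subset htmem hsub) (fun i _ _ => hf0 i)
        _ = Papprox e y (t + 1) := rfl
  have hb1 : ∀ y t, Papprox e y t ≤ 1 := by
    intro y t
    calc Papprox e y t ≤ ∑ i ∈ LbarIdx e t, (2:ℝ)⁻¹ ^ (e i).1.length := by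
          apply Finset.sum_le_sum
          intro i _
          split
          · exact le_refl _
          · positivity
      _ ≤ 1 := total_le_one e prog_inj (part1 t)
  have hmono : ∀ y, Monotone (fun t => Papprox e y t) :=
    fun y => monotone_nat_of_le_succ (part2 y)
  have hbdd : ∀ y, BddAbove (Set.range fun t => Papprox e y t) := by
    intro y
    refine ⟨1, ?_⟩
    rintro x ⟨t, rfl⟩
    exact hb1 y t
  set P : BStr → ℝ := fun y => ⨆ t, Papprox e y t with hP
  have htend : ∀ y, Tendsto (fun t => Papprox e y t) atTop (nhds (P y)) :=
    fun y => tendsto_atTop_ciSup (hmono y) (hbdd y)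
  have hPnn : ∀ y, 0 ≤ P y := by
    intro y
    have h0 : Papprox e y 0 = 0 := by simp [Papprox, LbarIdx]
    have hle := le_ciSup (hbdd y) 0
    rw [h0] at hle
    exact hle
  have hFsum : ∀ F : Finset BStr, ∑ y ∈ F, P y ≤ 1 := by
    intro F
    refine le_of_tendsto' (tendsto_finset_sum F (fun y _ => htend y)) ?_
    intro t
    calc ∑ y ∈ F, Papprox e y t
        = ∑ i ∈ LbarIdx e t, ∑ y ∈ F,
            (if (e i).2 = y then (2:ℝ)⁻¹ ^ (e i).1.length else 0) := Finset.sum_comm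
      _ ≤ ∑ i ∈ LbarIdx e t, (2:ℝ)⁻¹ ^ (e i).1.length := by
          apply Finset.sum_le_sum
          intro i _
          rw [Finset.sum_ite_eq F (e i).2 (fun _ => (2:ℝ)⁻¹ ^ (e i).1.length)]
          split
          · exact le_refl _
          · positivity
      _ ≤ 1 := total_le_one e prog_inj (part1 t)
  refine ⟨part1, part2, P, htend, ?_⟩
  rw [ENNReal.tsum_eq_iSup_sum]
  apply iSup_le
  intro F
  calc ∑ y ∈ F, ENNReal.ofReal (P y)
      = ENNReal.ofReal (∑ y ∈ F, P y) :=
        (ENNReal.ofReal_sum_of_nonneg (fun y _ => hPnn y)).symm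
    _ ≤ ENNReal.ofReal 1 := ENNReal.ofReal_le_ofReal (hFsum F)
    _ = 1 := ENNReal.ofReal_one
end

section
/- For the universal monotone machine U_M and any monotone machine L, there is a constant c_L > 0 such that M(y) ≥ c_L · M_L(y) for all finite binary strings y, where M(y) = Σ_{p : y ∈ U_M(p)} 2^{-ℓ(p)} and M_L(y) = Σ_{p : y ∈ L(p)} 2^{-ℓ(p)}. -/
open Filter ENNReal

lemma kraft_s4 {ι : Type*} (g : ι → BStr) (h : ∀ i j, g i <+: g j → i = j) :
    ∑' i, (2:ℝ≥0∞)⁻¹ ^ (g i).length ≤ 1 := by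
  classical
  rw [ENNReal.tsum_eq_iSup_sum]
  refine iSup_le fun F => ?_
  set n := F.sup fun i => (g i).length with hn
  have hle : ∀ i ∈ F, (g i).length ≤ n := fun i hi => Finset.le_sup (f := fun i => (g i).length) hi
  set T : ι → Finset BStr := fun i =>
    Finset.image (fun v : Fin (n - (g i).length) → Bool => g i ++ List.ofFn v) Finset.univ with hT
  have hinj : ∀ i, Function.Injective
      (fun v : Fin (n - (g i).length) → Bool => g i ++ List.ofFn v) := by
    intro i v w hvw
    exact List.ofFn_injective (List.append_cancel_left hvw)
  have hcard : ∀ i, (T i).card = 2 ^ (n - (g i).length) := by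
    intro i
    rw [hT]
    rw [Finset.card_image_of_injective _ (hinj i), Finset.card_univ]
    simp
  have hmemT : ∀ i t, t ∈ T i → g i <+: t ∧ t.length = (g i).length + (n - (g i).length) := by
    intro i t ht
    simp only [hT, Finset.mem_image, Finset.mem_univ, true_and] at ht
    obtain ⟨v, rfl⟩ := ht
    exact ⟨⟨_, rfl⟩, by simp⟩
  have hdisj : ∀ i ∈ F, ∀ j ∈ F, i ≠ j → Disjoint (T i) (T j) := by
    intro i _ j _ hij
    refine Finset.disjoint_left.mpr fun t hti htj => ?_
    obtain ⟨hpi, _⟩ := hmemT i t hti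
    obtain ⟨hpj, _⟩ := hmemT j t htj
    rcases List.prefix_or_prefix_of_prefix hpi hpj with hp | hp
    · exact hij (h i j hp)
    · exact hij (h j i hp).symm
  have hsub : F.biUnion T ⊆ Finset.image (fun v : Fin n → Bool => List.ofFn v) Finset.univ := by
    intro t ht
    obtain ⟨i, hi, hti⟩ := Finset.mem_biUnion.mp ht
    obtain ⟨_, hlen⟩ := hmemT i t hti
    have hlen' : t.length = n := by
      rw [hlen, Nat.add_sub_cancel' (hle i hi)]
    refine Finset.mem_image.mpr ⟨fun j => t.get (Fin.cast hlen'.symm j), Finset.mem_univ _, ?_⟩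
    apply List.ext_get (by simp [hlen'])
    intro m h1 h2
    simp [List.get_ofFn]
  have key : (∑ i ∈ F, 2 ^ (n - (g i).length)) ≤ 2 ^ n := by
    calc (∑ i ∈ F, 2 ^ (n - (g i).length)) = ∑ i ∈ F, (T i).card := by
          exact Finset.sum_congr rfl fun i _ => (hcard i).symm
      _ = (F.biUnion T).card := (Finset.card_biUnion hdisj).symm
      _ ≤ (Finset.image (fun v : Fin n → Bool => List.ofFn v) Finset.univ).card :=
          Finset.card_le_card hsub
      _ ≤ (Finset.univ : Finset (Fin n → Bool)).card := Finset.card_image_le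
      _ = 2 ^ n := by simp
  set a : ℝ≥0∞ := (2:ℝ≥0∞)⁻¹ with ha
  have h2 : a * 2 = 1 := ENNReal.inv_mul_cancel (by norm_num) (by norm_num)
  have hLn : ∀ L, L ≤ n → a ^ L = a ^ n * 2 ^ (n - L) := by
    intro L hLle
    have hnL : n = (n - L) + L := (Nat.sub_add_cancel hLle).symm
    calc a ^ L = (a * 2) ^ (n - L) * a ^ L := by rw [h2, one_pow, one_mul]
      _ = a ^ ((n - L) + L) * 2 ^ (n - L) := by rw [pow_add]; ring
      _ = a ^ n * 2 ^ (n - L) := by rw [← hnL]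
  calc (∑ i ∈ F, a ^ (g i).length) = ∑ i ∈ F, a ^ n * 2 ^ (n - (g i).length) :=
        Finset.sum_congr rfl fun i hi => hLn _ (hle i hi)
    _ = a ^ n * ∑ i ∈ F, (2:ℝ≥0∞) ^ (n - (g i).length) := by rw [Finset.mul_sum]
    _ = a ^ n * ((∑ i ∈ F, 2 ^ (n - (g i).length) : ℕ) : ℝ≥0∞) := by push_cast; ring
    _ ≤ a ^ n * ((2 ^ n : ℕ) : ℝ≥0∞) := by gcongr
    _ = (a * 2) ^ n := by push_cast; ring
    _ = 1 := by rw [h2, one_pow]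

lemma monOut_antichain {L : Set (BStr × BStr)} {p₁ p₂ y : BStr}
    (h₁ : MonOut L p₁ y) (h₂ : MonOut L p₂ y) (hpre : p₁ <+: p₂) : p₁ = p₂ := by
  by_contra hne
  obtain ⟨x, hx, hyx⟩ := h₁.1
  exact h₂.2 p₁ x hx hpre hne hyx

/-- the universal monotone machine multiplicatively dominates every
monotone machine. -/
theorem universal_monotone_dominates (U L : Set (BStr × BStr))
    (hU : IsUniversalMonotone U) (hL : MonotoneMachine L) :
    ∃ c : ℝ≥0∞, 0 < c ∧ ∀ y : BStr, c * MM L y ≤ MM U y := by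
  classical
  obtain ⟨ip, hip⟩ := hU.2 L hL
  refine ⟨(2:ℝ≥0∞)⁻¹ ^ ip.length,
    ENNReal.pow_pos (ENNReal.inv_pos.mpr (by norm_num)) _, fun y => ?_⟩
  have cancel : ∀ {a b : BStr}, ip ++ a <+: ip ++ b → a <+: b := by
    rintro a b ⟨u, hu⟩
    exact ⟨u, List.append_cancel_left (by rw [← List.append_assoc]; exact hu)⟩
  have key : ∀ p : BStr, MonOut L p y → ∃ r : BStr, MonOut U r y ∧ r <+: ip ++ p := by
    intro p hp
    obtain ⟨x, hx, hyx⟩ := hp.1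
    have hw : ((ip ++ p, x) ∈ U) := (hip p x).mp hx
    have hne : (ip ++ p).length ∈ {k | ∃ x, ((ip ++ p).take k, x) ∈ U ∧ y <+: x} :=
      ⟨x, by rw [List.take_length]; exact hw, hyx⟩
    set m := sInf {k | ∃ x, ((ip ++ p).take k, x) ∈ U ∧ y <+: x} with hm
    have hmem : m ∈ {k | ∃ x, ((ip ++ p).take k, x) ∈ U ∧ y <+: x} := Nat.sInf_mem ⟨_, hne⟩
    have hmle : m ≤ (ip ++ p).length := Nat.sInf_le hne
    obtain ⟨x', hx', hyx'⟩ := hmem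
    refine ⟨(ip ++ p).take m, ⟨⟨x', hx', hyx'⟩, ?_⟩, List.take_prefix _ _⟩
    intro q z hqz hq hneq hyz
    have hql : q <+: ip ++ p := hq.trans (List.take_prefix _ _)
    have hq' : q = (ip ++ p).take q.length := List.prefix_iff_eq_take.mp hql
    have h1 : m ≤ q.length := Nat.sInf_le ⟨z, by rw [← hq']; exact hqz, hyz⟩
    have h2 : q.length < ((ip ++ p).take m).length := by
      rcases lt_or_eq_of_le hq.length_le with h | h
      · exact h
      · exact absurd (hq.eq_of_length h) hneq
    rw [List.length_take, min_eq_left hmle] at h2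
    omega
  choose r hrU hrpre using key
  set f : {p : BStr // MonOut L p y} → ℝ≥0∞ :=
    fun p => (2:ℝ≥0∞)⁻¹ ^ (ip.length + (p : BStr).length) with hf
  have hLHS : (2:ℝ≥0∞)⁻¹ ^ ip.length * MM L y = ∑' p : {p : BStr // MonOut L p y}, f p := by
    rw [MM, ← ENNReal.tsum_mul_left]
    exact tsum_congr fun p => by rw [hf, ← pow_add]
  rw [hLHS, MM]
  set φ : {p : BStr // MonOut L p y} → {q : BStr // MonOut U q y} :=
    fun p => ⟨r p.1 p.2, hrU p.1 p.2⟩ with hφ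
  rw [← (Equiv.sigmaFiberEquiv φ).tsum_eq (f := f), ENNReal.tsum_sigma']
  refine ENNReal.tsum_le_tsum fun q => ?_
  set k := (q : BStr).length with hk
  have hqpre : ∀ p : {p : {p : BStr // MonOut L p y} // φ p = q}, (q : BStr) <+: ip ++ p.1.1 := by
    intro p
    have : r p.1.1 p.1.2 = (q : BStr) := congrArg Subtype.val p.2
    rw [← this]
    exact hrpre _ _
  have hkle : ∀ p : {p : {p : BStr // MonOut L p y} // φ p = q},
      k ≤ ip.length + p.1.1.length := by
    intro p
    have := (hqpre p).length_le
    simpa [List.length_append] using this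
  set ψ : {p : {p : BStr // MonOut L p y} // φ p = q} → BStr :=
    fun p => (ip ++ p.1.1).drop k with hψ
  have heq : ∀ p : {p : {p : BStr // MonOut L p y} // φ p = q},
      (q : BStr) ++ ψ p = ip ++ p.1.1 := by
    intro p
    have hq' : (q : BStr) = (ip ++ p.1.1).take k := List.prefix_iff_eq_take.mp (hqpre p)
    rw [hψ]
    conv_lhs => rw [hq']
    exact List.take_append_drop _ _
  have hpf : ∀ p₁ p₂, ψ p₁ <+: ψ p₂ → p₁ = p₂ := by
    intro p₁ p₂ hpre
    have h12 : ip ++ p₁.1.1 <+: ip ++ p₂.1.1 := by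
      rw [← heq p₁, ← heq p₂]
      obtain ⟨u, hu⟩ := hpre
      exact ⟨u, by rw [List.append_assoc, hu]⟩
    have := monOut_antichain p₁.1.2 p₂.1.2 (cancel h12)
    exact Subtype.ext (Subtype.ext this)
  have hlen : ∀ p : {p : {p : BStr // MonOut L p y} // φ p = q},
      (ψ p).length = ip.length + p.1.1.length - k := by
    intro p
    rw [hψ]
    simp [List.length_drop, List.length_append]
  calc ∑' p : {p : {p : BStr // MonOut L p y} // φ p = q}, f p.1
      = ∑' p : {p : {p : BStr // MonOut L p y} // φ p = q},
          (2:ℝ≥0∞)⁻¹ ^ k * (2:ℝ≥0∞)⁻¹ ^ (ψ p).length := by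
        refine tsum_congr fun p => ?_
        rw [hf, hlen p, ← pow_add, Nat.add_sub_cancel' (hkle p)]
    _ = (2:ℝ≥0∞)⁻¹ ^ k * ∑' p, (2:ℝ≥0∞)⁻¹ ^ (ψ p).length := ENNReal.tsum_mul_left
    _ ≤ (2:ℝ≥0∞)⁻¹ ^ k * 1 := by gcongr; exact kraft_s4 ψ hpf
    _ = (2:ℝ≥0∞)⁻¹ ^ (q : BStr).length := by rw [mul_one]
end

section
/- Suppose lim_{n→∞} m(ω_{<n})/M(ω_{<n}) = 0 for all infinite binary strings ω, and suppose for an infinite sequence of indices n_i one has M(ω_{<n_i}¬ω_{n_i}) ≤ c · m(ω_{<n_i}¬ω_{n_i}) for a constant c independent of i. Then lim_{i→∞} M_norm(ω_{n_i}|ω_{<n_i}) = 1. -/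
/-!
Flipping the last output bit is computable, so the universal prefix machine simulates the flipped
machine behind a fixed program prefix `ip`: `m(x¬b) ≤ 2 ^ |ip| · m(xb)`. Together with the
hypothesis this gives `M(x¬b) ≤ C · m(xb)` along the subsequence, while `m(xb) / M(xb) → 0`
there; hence `M(x¬b) / M(xb) → 0`, which is `M_norm(b | x) → 1` once we know
`0 < M(xb) ≤ 1` (universality and the Kraft inequality).
-/

open Filter ENNReal

open InformationTheory

theorem PrefixFreeSet.uniquelyDecodable {S : Set BStr} (hS : PrefixFreeSet S) (hnil : [] ∉ S) :
    UniquelyDecodable S := by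
  intro L₁
  induction L₁ with
  | nil =>
    rintro (_ | ⟨w, L₂⟩) - h₂ h
    · rfl
    · simp only [List.flatten_nil, List.flatten_cons, List.nil_eq, List.append_eq_nil_iff] at h
      exact absurd (h.1 ▸ h₂ w List.mem_cons_self) hnil
  | cons w L₁ ih =>
    rintro (_ | ⟨v, L₂⟩) h₁ h₂ h
    · simp only [List.flatten_nil, List.flatten_cons, List.append_eq_nil_iff] at h
      exact absurd (h.1 ▸ h₁ w List.mem_cons_self) hnil
    · simp only [List.flatten_cons] at h
      have hw := h₁ w List.mem_cons_self
      have hv := h₂ v List.mem_cons_self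
      have hwv : w = v := by
        rcases List.prefix_or_prefix_of_prefix (List.prefix_append w L₁.flatten)
          (h ▸ List.prefix_append v L₂.flatten) with hp | hp
        · exact hS w hw v hv hp
        · exact (hS v hv w hw hp).symm
      subst hwv
      rw [ih L₂ (fun x hx => h₁ x (List.mem_cons_of_mem _ hx))
        (fun x hx => h₂ x (List.mem_cons_of_mem _ hx)) (List.append_cancel_left h)]

theorem PrefixFreeSet.sum_le_one {S : Set BStr} (hS : PrefixFreeSet S) {F : Finset BStr}
    (hF : ↑F ⊆ S) : ∑ p ∈ F, (2 : ℝ≥0∞)⁻¹ ^ p.length ≤ 1 := by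
  by_cases hnil : [] ∈ S
  · have hF_nil : F ⊆ {[]} := fun p hp =>
      Finset.mem_singleton.2 (hS [] hnil p (hF hp) (List.nil_prefix)).symm
    calc ∑ p ∈ F, (2 : ℝ≥0∞)⁻¹ ^ p.length ≤ ∑ p ∈ {[]}, (2 : ℝ≥0∞)⁻¹ ^ p.length :=
          Finset.sum_le_sum_of_subset hF_nil
      _ = 1 := by simp
  · have hUD : UniquelyDecodable (F : Set BStr) := fun L₁ L₂ h₁ h₂ =>
      hS.uniquelyDecodable hnil L₁ L₂ (fun w hw => hF (h₁ w hw)) (fun w hw => hF (h₂ w hw))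
    have hreal := kraft_mcmillan_inequality hUD
    rw [Fintype.card_bool] at hreal
    calc ∑ p ∈ F, (2 : ℝ≥0∞)⁻¹ ^ p.length = ENNReal.ofReal (∑ p ∈ F, (1 / 2 : ℝ) ^ p.length) := by
          rw [ENNReal.ofReal_sum_of_nonneg (fun _ _ => by positivity)]
          refine Finset.sum_congr rfl fun p _ => ?_
          rw [ENNReal.ofReal_pow (by norm_num), one_div, ENNReal.ofReal_inv_of_pos two_pos]
          simp
      _ ≤ 1 := ENNReal.ofReal_le_one.2 (by exact_mod_cast hreal)

theorem PrefixFreeSet.kraft_inequality {S : Set BStr} (hS : PrefixFreeSet S) :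
    ∑' p : S, (2 : ℝ≥0∞)⁻¹ ^ (p : BStr).length ≤ 1 := by
  rw [ENNReal.tsum_eq_iSup_sum]
  refine iSup_le fun F => ?_
  have hF : ↑(F.map (Function.Embedding.subtype _)) ⊆ S := by
    simp only [Finset.coe_map, Function.Embedding.coe_subtype]
    exact Set.image_subset_iff.2 fun p _ => p.2
  simpa using hS.sum_le_one hF

theorem prefixFreeSet_monOut (L : Set (BStr × BStr)) (y : BStr) :
    PrefixFreeSet {p | MonOut L p y} := by
  rintro p ⟨⟨x, hpx, hyx⟩, -⟩ q ⟨-, hq⟩ hpq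
  by_contra hne
  exact hq p x hpx hpq hne hyx

theorem MM_le_one (L : Set (BStr × BStr)) (y : BStr) : MM L y ≤ 1 :=
  (prefixFreeSet_monOut L y).kraft_inequality

theorem MM_ne_top (L : Set (BStr × BStr)) (y : BStr) : MM L y ≠ ⊤ :=
  ne_top_of_le_ne_top one_ne_top (MM_le_one L y)

theorem exists_prefix_monOut {L : Set (BStr × BStr)} {p x y : BStr} (hpx : (p, x) ∈ L)
    (hyx : y <+: x) : ∃ q, q <+: p ∧ MonOut L q y := by
  by_cases hmin : ∀ q z, (q, z) ∈ L → q <+: p → q ≠ p → ¬ y <+: z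
  · exact ⟨p, List.prefix_refl p, ⟨x, hpx, hyx⟩, hmin⟩
  · push Not at hmin
    obtain ⟨q, z, hqz, hqp, hne, hyz⟩ := hmin
    have : q.length < p.length :=
      lt_of_le_of_ne hqp.length_le fun h => hne (hqp.eq_of_length h)
    obtain ⟨r, hrq, hr⟩ := exists_prefix_monOut hqz hyz
    exact ⟨r, hrq.trans hqp, hr⟩
termination_by p.length

theorem MM_pos_of_monOut {L : Set (BStr × BStr)} {p y : BStr} (h : MonOut L p y) :
    0 < MM L y :=
  (ENNReal.pow_pos (by simp) _).trans_le (ENNReal.le_tsum (⟨p, h⟩ : {p // MonOut L p y}))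

theorem monotoneMachine_singleton (y : BStr) : MonotoneMachine {([], y)} := by
  refine ⟨⟨fun _ => some ([], y), Computable.const _, ?_⟩, ?_⟩
  · ext q
    simp [eq_comm]
  · rintro p y' q x ⟨-, rfl⟩ ⟨-, rfl⟩ - -
    exact List.prefix_refl y

theorem IsUniversalMonotone.MM_pos {U : Set (BStr × BStr)} (hU : IsUniversalMonotone U)
    (y : BStr) : 0 < MM U y := by
  obtain ⟨ip, hip⟩ := hU.2 _ (monotoneMachine_singleton y)
  have hipy : (ip, y) ∈ U := by simpa using (hip [] y).1 rfl
  obtain ⟨q, -, hq⟩ := exists_prefix_monOut hipy (List.prefix_refl y)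
  exact MM_pos_of_monOut hq

theorem PrefixMachine.image_map_output {L : Set (BStr × BStr)} (hL : PrefixMachine L)
    {g : BStr → BStr} (hg : Computable g) : PrefixMachine (Prod.map id g '' L) := by
  obtain ⟨⟨f, hf, hfL⟩, hpf⟩ := hL
  have hprog : {p | ∃ w, (p, w) ∈ Prod.map id g '' L} = {p | ∃ y, (p, y) ∈ L} := by
    ext p
    simp
  refine ⟨⟨fun k => (f k).map (Prod.map id g), ?_, ?_⟩, hprog ▸ hpf⟩
  · exact Computable.option_map hf ((Computable.fst.pair (hg.comp Computable.snd)).comp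
      Computable.snd).to₂
  · ext q
    subst hfL
    simp only [Set.mem_image, Set.mem_ofPred_eq, Option.map_eq_some_iff]
    constructor
    · rintro ⟨r, ⟨k, hk⟩, rfl⟩
      exact ⟨k, r, hk, rfl⟩
    · rintro ⟨k, r, hk, rfl⟩
      exact ⟨r, ⟨k, hk⟩, rfl⟩

theorem inv_two_pow_mul_lamP_le {U : Set (BStr × BStr)} {ip y z : BStr}
    (h : ∀ p, (p, y) ∈ U → (ip ++ p, z) ∈ U) :
    (2 : ℝ≥0∞)⁻¹ ^ ip.length * lamP U y ≤ lamP U z := by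
  rw [lamP, lamP, ← ENNReal.tsum_mul_left]
  refine le_trans (le_of_eq (tsum_congr fun p => ?_)) (ENNReal.tsum_comp_le_tsum_of_injective
    (f := fun p : {p // (p, y) ∈ U} => (⟨ip ++ p.1, h p.1 p.2⟩ : {p // (p, z) ∈ U}))
    (fun p q hpq => Subtype.ext (List.append_cancel_left (congrArg Subtype.val hpq))) _)
  simp [pow_add]

def flipLast (l : BStr) : BStr := (l.reverse.modifyHead not).reverse

theorem computable_flipLast : Computable flipLast := by
  have hhead : Primrec fun l : BStr => l.modifyHead not :=
    (Primrec.option_casesOn Primrec.list_head? (Primrec.const ([] : BStr))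
      (Primrec.list_cons.comp (Primrec.not.comp Primrec.snd)
        (Primrec.list_tail.comp Primrec.fst)).to₂).of_eq fun l => by cases l <;> rfl
  exact (Primrec.list_reverse.comp (hhead.comp Primrec.list_reverse)).to_comp

theorem flipLast_concat (x : BStr) (b : Bool) : flipLast (x ++ [b]) = x ++ [!b] := by
  simp [flipLast]

theorem IsUniversalPrefix.exists_lamP_flip_le {U : Set (BStr × BStr)} (hU : IsUniversalPrefix U) :
    ∃ C : ℝ≥0∞, C ≠ ⊤ ∧ ∀ (x : BStr) (b : Bool), lamP U (x ++ [!b]) ≤ C * lamP U (x ++ [b]) := by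
  obtain ⟨ip, hip⟩ := hU.2 _ (hU.1.image_map_output computable_flipLast)
  refine ⟨2 ^ ip.length, pow_ne_top ofNat_ne_top, fun x b => ?_⟩
  have hsim : ∀ p, (p, x ++ [!b]) ∈ U → (ip ++ p, x ++ [b]) ∈ U := fun p hp =>
    (hip p _).1 ⟨(p, x ++ [!b]), hp, by simp [flipLast_concat]⟩
  have := inv_two_pow_mul_lamP_le hsim
  rwa [← ENNReal.inv_pow, ENNReal.inv_mul_le_iff (by simp) (by simp)] at this

theorem ENNReal.tendsto_div_self_add {ι : Type*} {l : Filter ι} {a e : ι → ℝ≥0∞}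
    (ha₀ : ∀ i, a i ≠ 0) (ha : ∀ i, a i ≠ ⊤) (he : Tendsto (fun i => e i / a i) l (nhds 0)) :
    Tendsto (fun i => a i / (a i + e i)) l (nhds 1) := by
  have hsum : Tendsto (fun i => 1 + e i / a i) l (nhds 1) := by
    simpa using (tendsto_const_nhds (x := (1 : ℝ≥0∞))).add he
  have hinv : Tendsto (fun i => (1 + e i / a i)⁻¹) l (nhds 1) := by simpa using hsum.inv
  refine hinv.congr fun i => ?_
  rw [← ENNReal.div_self (ha₀ i) (ha i), ← ENNReal.add_div,
    ENNReal.inv_div (Or.inl (ha i)) (Or.inl (ha₀ i))]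

theorem ENNReal.tendsto_div_of_le_mul {ι : Type*} {l : Filter ι} {a b e : ι → ℝ≥0∞} {C : ℝ≥0∞}
    (hC : C ≠ ⊤) (hle : ∀ i, e i ≤ C * b i) (hb : Tendsto (fun i => b i / a i) l (nhds 0)) :
    Tendsto (fun i => e i / a i) l (nhds 0) := by
  have hCb : Tendsto (fun i => C * (b i / a i)) l (nhds 0) := by
    simpa using ENNReal.Tendsto.const_mul hb (Or.inr hC)
  refine tendsto_of_tendsto_of_tendsto_of_le_of_le tendsto_const_nhds hCb (fun _ => zero_le)
    fun i => ?_
  rw [← mul_div_assoc]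
  exact ENNReal.div_le_div_right (hle i) _

theorem pre_succ (ω : ℕ → Bool) (k : ℕ) : pre ω (k + 1) = pre ω k ++ [ω k] := by
  simp [pre, List.range_succ]

/-- if m/M → 0 along every sequence and M(ω_{<n_i}¬ω_{n_i}) ≤ c·m(ω_{<n_i}¬ω_{n_i}),
then M_norm(ω_{n_i}|ω_{<n_i}) → 1. -/
theorem Mnorm_converges_of_gap (UM UP : Set (BStr × BStr))
    (hUM : IsUniversalMonotone UM) (hUP : IsUniversalPrefix UP)
    (ω : ℕ → Bool) (n : ℕ → ℕ) (hn : StrictMono n)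
    (hgap : ∀ ω' : ℕ → Bool,
      Tendsto (fun k => lamP UP (pre ω' k) / MM UM (pre ω' k)) atTop (nhds 0))
    (hc : ∃ c : ℝ≥0∞, c < ⊤ ∧ ∀ i,
      MM UM (pre ω (n i) ++ [!(ω (n i))]) ≤ c * lamP UP (pre ω (n i) ++ [!(ω (n i))])) :
    Tendsto (fun i =>
      MM UM (pre ω (n i) ++ [ω (n i)]) /
        (MM UM (pre ω (n i) ++ [false]) + MM UM (pre ω (n i) ++ [true])))
      atTop (nhds 1) := by
  obtain ⟨c, hc, hwrong⟩ := hc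
  obtain ⟨C, hC, hflip⟩ := hUP.exists_lamP_flip_le
  have hright : Tendsto (fun i => lamP UP (pre ω (n i) ++ [ω (n i)]) /
      MM UM (pre ω (n i) ++ [ω (n i)])) atTop (nhds 0) := by
    simpa only [Function.comp_def, pre_succ] using
      (hgap ω).comp ((tendsto_add_atTop_nat 1).comp hn.tendsto_atTop)
  have hratio := ENNReal.tendsto_div_of_le_mul (mul_ne_top hc.ne hC)
    (fun i => (hwrong i).trans (mul_assoc c C _ ▸ mul_le_mul_right (hflip _ _) c)) hright
  refine (ENNReal.tendsto_div_self_add (fun i => (hUM.MM_pos _).ne') (fun i => MM_ne_top _ _)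
    hratio).congr fun i => ?_
  cases ω (n i) <;> simp [add_comm]
end
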